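/- arXiv:2504.12534 — 2 statements merged into one kernel-verified Lean document; each statement's English description precedes it below -/
import Mathlib

section
/- For every n ∈ ℕ, if x ∈ Λ_n ∖ Λ_{n+1} and y ∈ Λ_{n+1} ∖ P_{n+1}, then φ_α(x) < φ_α(y). (Precise form of the paper's Lemma 2.4(b): points deeper in the construction of Λ take strictly larger φ_α-values.) -/
open Set MeasureTheory Filter
open scoped ENNReal Topology Classical

/-- The setup of Section 2 of the paper: a full-branched Markov linear map `G` on `[0,1]`
with branch domains `I_1,…,I_{k_I}` (mapped affinely onto `[0,1]`) and complementary
intervals `J_j` (mapped affinely onto `(0,1)`), all of length at most `1/2`. -/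
structure CantorData where
  kI : ℕ
  hkI : 1 ≤ kI
  a : ℕ → ℝ
  ha_lt : ∀ i, i + 1 < 2 * kI → a i < a (i + 1)
  ha0 : 0 ≤ a 0
  ha1 : a (2 * kI - 1) ≤ 1
  G : ℝ → ℝ
  hGmaps : Set.MapsTo G (Set.Icc 0 1) (Set.Icc 0 1)
  hGI : ∀ i < kI, ∃ s c : ℝ,
    |s| * (a (2 * i + 1) - a (2 * i)) = 1 ∧
    (∀ x ∈ Set.Icc (a (2 * i)) (a (2 * i + 1)), G x = s * x + c) ∧
    Set.BijOn G (Set.Icc (a (2 * i)) (a (2 * i + 1))) (Set.Icc 0 1)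
  hGJmid : ∀ i, i + 1 < kI → ∃ s c : ℝ,
    |s| * (a (2 * i + 2) - a (2 * i + 1)) = 1 ∧
    (∀ x ∈ Set.Ioo (a (2 * i + 1)) (a (2 * i + 2)), G x = s * x + c) ∧
    Set.SurjOn G (Set.Ioo (a (2 * i + 1)) (a (2 * i + 2))) (Set.Ioo 0 1)
  hGJleft : 0 < a 0 → ∃ s c : ℝ,
    |s| * a 0 = 1 ∧
    (∀ x ∈ Set.Ico 0 (a 0), G x = s * x + c) ∧
    Set.SurjOn G (Set.Ico 0 (a 0)) (Set.Ioo 0 1)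
  hGJright : a (2 * kI - 1) < 1 → ∃ s c : ℝ,
    |s| * (1 - a (2 * kI - 1)) = 1 ∧
    (∀ x ∈ Set.Ioc (a (2 * kI - 1)) 1, G x = s * x + c) ∧
    Set.SurjOn G (Set.Ioc (a (2 * kI - 1)) 1) (Set.Ioo 0 1)
  hIlen : ∀ i < kI, a (2 * i + 1) - a (2 * i) ≤ 1 / 2
  hJlenL : a 0 ≤ 1 / 2
  hJlenR : 1 - a (2 * kI - 1) ≤ 1 / 2
  hJlenM : ∀ i, i + 1 < kI → a (2 * i + 2) - a (2 * i + 1) ≤ 1 / 2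
  hkJ : (Set.Icc (0:ℝ) 1 \ ⋃ i ∈ Finset.range kI,
      Set.Icc (a (2 * i)) (a (2 * i + 1))).Nonempty

namespace CantorData

variable (S : CantorData)

/-- The union `⋃_i I_i` of the branch domains forming the Cantor construction. -/
def IU : Set ℝ := ⋃ i ∈ Finset.range S.kI, Set.Icc (S.a (2 * i)) (S.a (2 * i + 1))

/-- `Λ_n = {x ∈ [0,1] : G^{i-1}(x) ∈ ⋃ I for all 1 ≤ i ≤ n}`. -/
def Lam (n : ℕ) : Set ℝ := {x ∈ Set.Icc (0:ℝ) 1 | ∀ i < n, S.G^[i] x ∈ S.IU}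

/-- The dynamically defined Cantor set `Λ = ⋂_n Λ_n`. -/
def Cantor : Set ℝ := ⋂ n : ℕ, S.Lam n

/-- `λ = |⋃ I_i| = Σ_i 1/m_i`. -/
noncomputable def lam : ℝ := ∑ i ∈ Finset.range S.kI, (S.a (2 * i + 1) - S.a (2 * i))

/-- `𝔪`, Lebesgue measure on `[0,1]`. -/
noncomputable def mes (_S : CantorData) : Measure ℝ := volume.restrict (Set.Icc 0 1)

/-- `ψ(x) = Σ_{i ∈ 𝓘_x} 2^{-i}` where `𝓘_x = {i ≥ 1 : G^{i-1}(x) ∉ ⋃ I}`. -/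
noncomputable def psi (x : ℝ) : ℝ :=
  ∑' i : ℕ, if S.G^[i] x ∈ S.IU then 0 else (2:ℝ)⁻¹ ^ (i + 1)

/-- `F(t) = 𝔪{x : ψ(x) ≤ t}`, the distribution function of `ψ`. -/
noncomputable def F (t : ℝ) : ℝ := (S.mes {x | S.psi x ≤ t}).toReal

/-- `φ_α = (F ∘ ψ)^{-1/α}`, with value `∞` where `F ∘ ψ` vanishes. -/
noncomputable def phi (α : ℝ) (x : ℝ) : ℝ≥0∞ :=
  ENNReal.ofReal (S.F (S.psi x)) ^ (-(1 / α))

/-- `X_n = φ_α ∘ G^n`. -/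
noncomputable def X (α : ℝ) (n : ℕ) (x : ℝ) : ℝ≥0∞ := S.phi α (S.G^[n] x)

/-- `P_n`: the points following the Cantor construction exactly `n` steps and
never entering `⋃ I` afterwards. -/
def Pset (n : ℕ) : Set ℝ :=
  {x ∈ Set.Icc (0:ℝ) 1 | (∀ i < n, S.G^[i] x ∈ S.IU) ∧ ∀ i, n ≤ i → S.G^[i] x ∉ S.IU}

/-- The family of partition intervals `(I,J)_1,…,(I,J)_{k_I+k_J}`. -/
def PieceFamily : Set (Set ℝ) :=
  ((fun i => Set.Icc (S.a (2 * i)) (S.a (2 * i + 1))) '' Set.Iio S.kI) ∪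
  ((fun i => Set.Ioo (S.a (2 * i + 1)) (S.a (2 * i + 2))) '' {i | i + 1 < S.kI}) ∪
  {Set.Ico (0:ℝ) (S.a 0), Set.Ioc (S.a (2 * S.kI - 1)) 1}

/-- The depth-`d` cylinder `C_w = ⋂_{k=1}^d G^{-(k-1)}((I,J)_{w_k})`. -/
def Cyl (d : ℕ) (w : ℕ → Set ℝ) : Set ℝ := ⋂ k ∈ Finset.range d, (S.G^[k]) ⁻¹' (w k)

/-- `C` is a depth-`d` cylinder. -/
def IsCylinder (d : ℕ) (C : Set ℝ) : Prop :=
  ∃ w : ℕ → Set ℝ, (∀ k < d, w k ∈ S.PieceFamily) ∧ C = S.Cyl d w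

/-- `Υ⁺(A,d)`: union of the depth-`d` cylinders meeting `A`. -/
def upApprox (A : Set ℝ) (d : ℕ) : Set ℝ :=
  ⋃₀ {C | S.IsCylinder d C ∧ (C ∩ A).Nonempty}

/-- `Υ⁻(A,d)`: union of the depth-`d` cylinders contained in `A`. -/
def lowApprox (A : Set ℝ) (d : ℕ) : Set ℝ :=
  ⋃₀ {C | S.IsCylinder d C ∧ C ⊆ A}

/-- `u_n(τ) = (n/τ)^{1/α}`. -/
noncomputable def un (_S : CantorData) (α τ : ℝ) (n : ℕ) : ℝ := ((n : ℝ) / τ) ^ (1 / α)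

/-- `U_n(τ) = {X_0 > u_n(τ)}`. -/
noncomputable def Un (α τ : ℝ) (n : ℕ) : Set ℝ :=
  {x ∈ Set.Icc (0:ℝ) 1 | ENNReal.ofReal (S.un α τ n) < S.X α 0 x}

/-- `U_n^{(1)}(τ) = U_n(τ) ∩ G^{-1}([0,1] ∖ U_n(τ))`. -/
noncomputable def Un1 (α τ : ℝ) (n : ℕ) : Set ℝ :=
  S.Un α τ n ∩ S.G ⁻¹' (Set.Icc 0 1 \ S.Un α τ n)

/-- `U_n(τ',τ'') = U_n(τ') ∖ U_n(τ'')`. -/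
noncomputable def UnPair (α τ' τ'' : ℝ) (n : ℕ) : Set ℝ := S.Un α τ' n \ S.Un α τ'' n

/-- `U_n(τ',τ'')^{(1)}`. -/
noncomputable def UnPair1 (α τ' τ'' : ℝ) (n : ℕ) : Set ℝ :=
  S.UnPair α τ' τ'' n ∩ S.G ⁻¹' (Set.Icc 0 1 \ S.UnPair α τ' τ'' n)

/-- `j_{n,τ}`: the least `j` with `λ^j ≤ τ/n`. -/
noncomputable def jn (τ : ℝ) (n : ℕ) : ℕ := sInf {j : ℕ | S.lam ^ j ≤ τ / n}

/-- `Γ_n^+`: outer approximation of `U_n(τ',τ'')^{(1)}` by depth-`2 j_{n,τ'}` cylinders. -/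
noncomputable def GammaPlus (α τ' τ'' : ℝ) (n : ℕ) : Set ℝ :=
  S.upApprox (S.UnPair1 α τ' τ'' n) (2 * S.jn τ' n)

/-- `Γ_n^-`: inner approximation of `U_n(τ',τ'')^{(1)}` by depth-`2 j_{n,τ'}` cylinders. -/
noncomputable def GammaMinus (α τ' τ'' : ℝ) (n : ℕ) : Set ℝ :=
  S.lowApprox (S.UnPair1 α τ' τ'' n) (2 * S.jn τ' n)

end CantorData

/-! If `x` leaves `⋃ I` at step `n`, the binary code `ψ x` has digit `n + 1` equal to `1`, so
`ψ x ≥ 2^{-(n+1)}`; `y` stays in `⋃ I` for `n + 1` steps and returns to it later, so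
`ψ y < 2^{-(n+1)}`. The distribution function `F` increases strictly between these values:
the points that stay in `⋃ I` for `n + 1` steps and then avoid it for `K` steps form a nonempty
open set (pull `(0,1)` back through the affine branches of `G`), and on it `ψ` takes values in
`[2^{-(n+1)} - 2^{-(n+1+K)}, 2^{-(n+1)}]`, which lies above `ψ y` for large `K`. Finally
`φ_α = (F ∘ ψ)^{-1/α}` is strictly decreasing in `F ∘ ψ`. -/

open Function

lemma exists_isOpen_subset_mapsTo {X Y : Type*} [TopologicalSpace X] [TopologicalSpace Y]
    {f G : X → Y} {D : Set X} {U : Set Y} (hf : Continuous f) (hf_inj : Injective f)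
    (hGf : EqOn G f D) (hU : IsOpen U) (hU_ne : U.Nonempty) (hUD : U ⊆ G '' D) :
    ∃ V, IsOpen V ∧ V.Nonempty ∧ V ⊆ D ∧ MapsTo G V U := by
  have hVD : f ⁻¹' U ⊆ D := by
    intro v hv
    obtain ⟨w, hwD, hw⟩ := hUD hv
    rw [hGf hwD] at hw
    exact hf_inj hw ▸ hwD
  obtain ⟨u, hu⟩ := hU_ne
  obtain ⟨w, hwD, rfl⟩ := hUD hu
  refine ⟨f ⁻¹' U, hU.preimage hf, ⟨w, ?_⟩, hVD, fun v hv => ?_⟩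
  · rwa [mem_preimage, ← hGf hwD]
  · rw [hGf (hVD hv)]
    exact hv

/-- The binary number `0.d₁d₂…` with `d_{i+1} = 1` iff `¬ p i`. -/
noncomputable def binaryValue (p : ℕ → Prop) : ℝ :=
  ∑' i, if p i then 0 else (2:ℝ)⁻¹ ^ (i + 1)

lemma summable_binaryValue (p : ℕ → Prop) :
    Summable fun i => if p i then (0:ℝ) else (2:ℝ)⁻¹ ^ (i + 1) := by
  refine .of_nonneg_of_le (fun i => by positivity) (fun i => ?_)
    ((summable_nat_add_iff 1).2 (summable_geometric_of_lt_one (r := (2:ℝ)⁻¹) (by norm_num)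
      (by norm_num)))
  split_ifs <;> simp

lemma binaryValue_Iio (m : ℕ) : binaryValue (· < m) = (2:ℝ)⁻¹ ^ m :=
  calc binaryValue (· < m) = ∑' i : ℕ, 2⁻¹ * if m ≤ i then (2:ℝ)⁻¹ ^ i else 0 :=
        tsum_congr fun i => by split_ifs <;> first | omega | ring
    _ = (2:ℝ)⁻¹ ^ m := by rw [tsum_mul_left, tsum_geometric_inv_two_ge]; ring

lemma binaryValue_anti {p q : ℕ → Prop} (hpq : ∀ i, p i → q i) :
    binaryValue q ≤ binaryValue p :=
  (summable_binaryValue q).tsum_le_tsum (fun i => by split_ifs <;> simp_all)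
    (summable_binaryValue p)

lemma binaryValue_lt {p q : ℕ → Prop} (hpq : ∀ i, p i → q i) {j : ℕ} (hqj : q j)
    (hpj : ¬ p j) : binaryValue q < binaryValue p :=
  (summable_binaryValue q).tsum_lt_tsum (i := j) (fun i => by split_ifs <;> simp_all)
    (by simp [hqj, hpj]) (summable_binaryValue p)

lemma sub_le_binaryValue {p : ℕ → Prop} {m K : ℕ} (hp : ∀ i, m ≤ i → i < m + K → ¬ p i) :
    (2:ℝ)⁻¹ ^ m - 2⁻¹ ^ (m + K) ≤ binaryValue p := by
  rw [← binaryValue_Iio, ← binaryValue_Iio, binaryValue, binaryValue,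
    ← (summable_binaryValue _).tsum_sub (summable_binaryValue _)]
  refine ((summable_binaryValue _).sub (summable_binaryValue _)).tsum_le_tsum (fun i => ?_)
    (summable_binaryValue p)
  by_cases h : m ≤ i ∧ i < m + K
  · simp [hp i h.1 h.2, h.2, not_lt.2 h.1]
  · split_ifs <;> first | omega | simp

namespace CantorData

variable (S : CantorData)

lemma a_mono : MonotoneOn S.a (Iio (2 * S.kI)) :=
  (strictMonoOn_of_lt_succ ordConnected_Iio fun i _ _ hi => by
    simpa only [Order.succ_eq_add_one] using S.ha_lt i (by simpa using hi)).monotoneOn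

lemma a_mem_Icc {i : ℕ} (hi : i < 2 * S.kI) : S.a i ∈ Icc 0 1 :=
  ⟨S.ha0.trans (S.a_mono (by simp; omega) hi (Nat.zero_le i)),
    (S.a_mono hi (by simp; have := S.hkI; omega) (by omega)).trans S.ha1⟩

lemma IU_subset_Icc : S.IU ⊆ Icc (S.a 0) (S.a (2 * S.kI - 1)) := by
  intro z hz
  simp only [IU, mem_iUnion, Finset.mem_range] at hz
  obtain ⟨i, hi, hzi⟩ := hz
  exact ⟨(S.a_mono (by simp; omega) (by simp; omega) (Nat.zero_le _)).trans hzi.1,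
    hzi.2.trans (S.a_mono (by simp; omega) (by simp; omega) (by omega))⟩

def IsAffineBranch (D : Set ℝ) : Prop :=
  D ⊆ Icc 0 1 ∧ ∃ s c : ℝ, s ≠ 0 ∧ EqOn S.G (fun x => s * x + c) D ∧ Ioo 0 1 ⊆ S.G '' D

lemma isAffineBranch_Icc : S.IsAffineBranch (Icc (S.a 0) (S.a 1)) := by
  have hk := S.hkI
  obtain ⟨s, c, hsc, hGsc, hbij⟩ := S.hGI 0 hk
  refine ⟨Icc_subset_Icc (S.a_mem_Icc (by omega)).1 (S.a_mem_Icc (by omega)).2,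
    s, c, ?_, hGsc, Ioo_subset_Icc_self.trans hbij.surjOn⟩
  rintro rfl
  simp at hsc

lemma exists_isAffineBranch_disjoint_IU : ∃ D, S.IsAffineBranch D ∧ Disjoint D S.IU := by
  have hk := S.hkI
  have hsc_ne {s L : ℝ} (h : |s| * L = 1) : s ≠ 0 := by rintro rfl; simp at h
  by_cases hk2 : 2 ≤ S.kI
  · obtain ⟨s, c, hsc, hGsc, hsurj⟩ := S.hGJmid 0 (by omega)
    refine ⟨Ioo (S.a 1) (S.a 2), ⟨Ioo_subset_Icc_self.trans (Icc_subset_Icc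
      (S.a_mem_Icc (by omega)).1 (S.a_mem_Icc (by omega)).2), s, c, hsc_ne hsc, hGsc, hsurj⟩, ?_⟩
    refine disjoint_left.2 fun z hz hzI => ?_
    simp only [IU, mem_iUnion, Finset.mem_range] at hzI
    obtain ⟨j, hj, hzj⟩ := hzI
    rcases Nat.eq_zero_or_pos j with rfl | hj0
    · exact hz.1.not_ge hzj.2
    · exact hz.2.not_ge ((S.a_mono (by simp; omega) (by simp; omega) (by omega)).trans hzj.1)
  rcases lt_or_ge 0 (S.a 0) with h0 | h0
  · obtain ⟨s, c, hsc, hGsc, hsurj⟩ := S.hGJleft h0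
    exact ⟨Ico 0 (S.a 0), ⟨Ico_subset_Icc_self.trans (Icc_subset_Icc le_rfl
      (S.a_mem_Icc (by omega)).2), s, c, hsc_ne hsc, hGsc, hsurj⟩,
      disjoint_left.2 fun z hz hzI => hz.2.not_ge (S.IU_subset_Icc hzI).1⟩
  rcases lt_or_ge (S.a (2 * S.kI - 1)) 1 with h1 | h1
  · obtain ⟨s, c, hsc, hGsc, hsurj⟩ := S.hGJright h1
    exact ⟨Ioc (S.a (2 * S.kI - 1)) 1, ⟨Ioc_subset_Icc_self.trans (Icc_subset_Icc
      (S.a_mem_Icc (by omega)).1 le_rfl), s, c, hsc_ne hsc, hGsc, hsurj⟩,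
      disjoint_left.2 fun z hz hzI => hz.1.not_ge (S.IU_subset_Icc hzI).2⟩
  -- with a single `I`-interval equal to `[0,1]` there would be no `J`-interval
  exfalso
  obtain ⟨u, hu01, huI⟩ := S.hkJ
  have h2k : 2 * S.kI - 1 = 2 * 0 + 1 := by omega
  rw [h2k] at h1
  exact huI (mem_biUnion (x := 0) (by simp; omega) ⟨h0.trans hu01.1, hu01.2.trans h1⟩)

lemma exists_isAffineBranch (b : Prop) :
    ∃ D, S.IsAffineBranch D ∧ ∀ z ∈ D, (z ∈ S.IU ↔ b) := by
  by_cases hb : b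
  · refine ⟨_, S.isAffineBranch_Icc, fun z hz => iff_of_true ?_ hb⟩
    exact mem_biUnion (x := 0) (by simp; exact S.hkI) hz
  · obtain ⟨D, hD, hDI⟩ := S.exists_isAffineBranch_disjoint_IU
    exact ⟨D, hD, fun z hz => iff_of_false (disjoint_left.1 hDI hz) hb⟩

lemma exists_isOpen_itinerary (d : ℕ) (w : ℕ → Prop) : ∃ U : Set ℝ, IsOpen U ∧ U.Nonempty ∧
    U ⊆ Ioo 0 1 ∧ ∀ z ∈ U, ∀ i < d, (S.G^[i] z ∈ S.IU ↔ w i) := by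
  induction d generalizing w with
  | zero => exact ⟨Ioo 0 1, isOpen_Ioo, nonempty_Ioo.2 zero_lt_one, subset_rfl, by simp⟩
  | succ d ih =>
    obtain ⟨U, hU, hU_ne, hU01, hUw⟩ := ih (fun i => w (i + 1))
    obtain ⟨D, ⟨hD01, s, c, hs, hGD, hsurj⟩, hDw⟩ := S.exists_isAffineBranch (w 0)
    obtain ⟨V, hV, hV_ne, hVD, hGV⟩ := exists_isOpen_subset_mapsTo (by fun_prop)
      (fun x y h => mul_left_cancel₀ hs (add_right_cancel h)) hGD hU hU_ne (hU01.trans hsurj)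
    refine ⟨V, hV, hV_ne, interior_Icc (a := (0:ℝ)) (b := 1) ▸
      interior_maximal (hVD.trans hD01) hV, fun z hz i hi => ?_⟩
    cases i with
    | zero => exact hDw z (hVD hz)
    | succ i =>
      rw [iterate_succ_apply]
      exact hUw _ (hGV hz) i (by omega)

end CantorData

lemma toReal_measure_setOf_le_lt {X : Type*} [MeasurableSpace X] {μ : Measure X}
    [IsFiniteMeasure μ] {f : X → ℝ} {s t : ℝ} {W : Set X} (hW : MeasurableSet W)
    (hμW : μ W ≠ 0) (hfW : ∀ z ∈ W, f z ∈ Ioc s t) :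
    (μ {z | f z ≤ s}).toReal < (μ {z | f z ≤ t}).toReal := by
  obtain ⟨z₀, hz₀⟩ := nonempty_of_measure_ne_zero hμW
  have hst : s ≤ t := (hfW z₀ hz₀).1.le.trans (hfW z₀ hz₀).2
  have hdisj : Disjoint {z | f z ≤ s} W :=
    disjoint_left.2 fun z hs hzW => (hfW z hzW).1.not_ge hs
  have hsub : {z | f z ≤ s} ∪ W ⊆ {z | f z ≤ t} :=
    union_subset (fun z hz => le_trans hz hst) fun z hz => (hfW z hz).2
  refine ENNReal.toReal_strict_mono (measure_ne_top _ _) ?_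
  calc μ {z | f z ≤ s} < μ {z | f z ≤ s} + μ W := ENNReal.lt_add_right (measure_ne_top _ _) hμW
    _ = μ ({z | f z ≤ s} ∪ W) := (measure_union hdisj hW).symm
    _ ≤ μ {z | f z ≤ t} := measure_mono hsub

namespace CantorData

variable (S : CantorData)

instance : IsFiniteMeasure S.mes := Real.isFiniteMeasure_restrict_Icc 0 1

lemma psi_eq_binaryValue (z : ℝ) : S.psi z = binaryValue fun i => S.G^[i] z ∈ S.IU := rfl

lemma pow_le_psi {z : ℝ} {n : ℕ} (hz : S.G^[n] z ∉ S.IU) : (2:ℝ)⁻¹ ^ (n + 1) ≤ S.psi z := by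
  have h := sub_le_binaryValue (p := fun i => S.G^[i] z ∈ S.IU) (m := n) (K := 1)
    fun i h₁ h₂ => (show i = n by omega) ▸ hz
  rw [psi_eq_binaryValue]
  linarith [pow_succ (2:ℝ)⁻¹ n]

lemma psi_lt_pow {z : ℝ} {m j : ℕ} (hz : ∀ i < m, S.G^[i] z ∈ S.IU) (hmj : m ≤ j)
    (hj : S.G^[j] z ∈ S.IU) : S.psi z < (2:ℝ)⁻¹ ^ m :=
  binaryValue_Iio m ▸ binaryValue_lt hz hj (by omega)

lemma exists_isOpen_psi_mem_Ioc {b : ℝ} {m : ℕ} (hb : b < (2:ℝ)⁻¹ ^ m) :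
    ∃ W : Set ℝ, IsOpen W ∧ W.Nonempty ∧ W ⊆ Ioo 0 1 ∧ ∀ z ∈ W, S.psi z ∈ Ioc b (2⁻¹ ^ m) := by
  obtain ⟨K, hK⟩ := exists_pow_lt_of_lt_one (sub_pos.2 hb) (by norm_num : (2:ℝ)⁻¹ < 1)
  have hmK : (2:ℝ)⁻¹ ^ (m + K) ≤ 2⁻¹ ^ K := pow_le_pow_of_le_one (by norm_num) (by norm_num) (by omega)
  obtain ⟨W, hW, hW_ne, hW01, hWw⟩ := S.exists_isOpen_itinerary (m + K) (· < m)
  refine ⟨W, hW, hW_ne, hW01, fun z hz => ⟨?_, ?_⟩⟩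
  · have := sub_le_binaryValue (p := fun i => S.G^[i] z ∈ S.IU)
      fun i h₁ h₂ hi => ((hWw z hz i h₂).1 hi).not_ge h₁
    rw [psi_eq_binaryValue]
    linarith
  · exact binaryValue_Iio m ▸ binaryValue_anti fun i hi => (hWw z hz i (by omega)).2 hi

lemma F_mono : Monotone S.F := fun _ _ hst =>
  ENNReal.toReal_mono (measure_ne_top _ _) (measure_mono fun _ hz => le_trans hz hst)

lemma F_lt_F_pow {b : ℝ} {m : ℕ} (hb : b < (2:ℝ)⁻¹ ^ m) : S.F b < S.F (2⁻¹ ^ m) := by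
  obtain ⟨W, hW, hW_ne, hW01, hψW⟩ := S.exists_isOpen_psi_mem_Ioc hb
  refine toReal_measure_setOf_le_lt hW.measurableSet ?_ hψW
  rw [mes, Measure.restrict_apply hW.measurableSet,
    inter_eq_left.2 (hW01.trans Ioo_subset_Icc_self)]
  exact hW.measure_ne_zero volume hW_ne

lemma phi_lt_phi {α : ℝ} (hα : 0 < α) {x y : ℝ} (h : S.F (S.psi y) < S.F (S.psi x)) :
    S.phi α x < S.phi α y := by
  rw [phi, phi, ENNReal.rpow_neg, ENNReal.rpow_neg, ENNReal.inv_lt_inv]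
  exact ENNReal.rpow_lt_rpow ((ENNReal.ofReal_lt_ofReal_iff_of_nonneg ENNReal.toReal_nonneg).2 h)
    (by positivity)

end CantorData

/-- if `x ∈ Λ_n ∖ Λ_{n+1}` and `y ∈ Λ_{n+1} ∖ P_{n+1}`, then
`φ_α(x) < φ_α(y)`. -/
theorem phi_lt_of_deeper (S : CantorData) (α : ℝ)
    (hα : α ∈ Set.Ioo (0:ℝ) 2) (n : ℕ)
    (x : ℝ) (hx : x ∈ S.Lam n \ S.Lam (n + 1))
    (y : ℝ) (hy : y ∈ S.Lam (n + 1) \ S.Pset (n + 1)) :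
    S.phi α x < S.phi α y := by
  obtain ⟨⟨hx01, hx_in⟩, hx_out⟩ := hx
  obtain ⟨⟨hy01, hy_in⟩, hy_out⟩ := hy
  have hx_n : S.G^[n] x ∉ S.IU := fun h =>
    hx_out ⟨hx01, fun i hi => (Nat.lt_succ_iff_lt_or_eq.1 hi).elim (hx_in i) (· ▸ h)⟩
  obtain ⟨j, hj, hyj⟩ : ∃ j, n + 1 ≤ j ∧ S.G^[j] y ∈ S.IU := by
    by_contra! h
    exact hy_out ⟨hy01, hy_in, h⟩
  have hψy : S.psi y < 2⁻¹ ^ (n + 1) := S.psi_lt_pow hy_in hj hyj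
  have hψx : 2⁻¹ ^ (n + 1) ≤ S.psi x := S.pow_le_psi hx_n
  exact S.phi_lt_phi hα.1 ((S.F_lt_F_pow hψy).trans_le (S.F_mono hψx))
end

section
/- The distribution function F of ψ satisfies the exact self-similarity relation F(s) = λ · F(2s) for every s ∈ [0, 1/2]. (Scaling relation underlying the computations of the extremal index and of the anchored tail process.) -/
open Set MeasureTheory Filter
open scoped ENNReal Topology Classical

/-!
For `x ∈ ⋃ I_i` the series defining `ψ` shifts, `ψ x = ψ (G x) / 2`, and the part of
`G⁻¹ A` inside `I_i` is an affine copy of `A ⊆ [0,1]` scaled by `|I_i|`; hence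
`{ψ ≤ s} ∩ ⋃ I_i` has measure `λ · 𝔪{ψ ≤ 2s}`. For `x ∉ ⋃ I_i` the first term gives
`ψ x = 1/2 + ψ (G x) / 2`, so when `s ≤ 1/2` the condition `ψ x ≤ s` forces `ψ (G x) = 0`,
i.e. `G x ∈ Λ`. The Cantor set is null because `𝔪(Λ_n) ≤ λⁿ` and `λ < 1` (the complement
of the closed set `⋃ I_i` in `[0,1]` is nonempty, hence has interior), and the gap branches
`h_j` are affine with nonzero slope, so they pull null sets back to null sets.
-/

lemma volume_preimage_affine {s : ℝ} (hs : s ≠ 0) (c : ℝ) (A : Set ℝ) :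
    volume ((fun x => s * x + c) ⁻¹' A) = ENNReal.ofReal |s⁻¹| * volume A := by
  change volume ((s * ·) ⁻¹' ((· + c) ⁻¹' A)) = _
  rw [Real.volume_preimage_mul_left hs, measure_preimage_add_right]

lemma inter_preimage_eq_preimage_affine {f : ℝ → ℝ} {P A B : Set ℝ} {s c : ℝ} (hs : s ≠ 0)
    (hf : ∀ x ∈ P, f x = s * x + c) (hsurj : SurjOn f P B) (hA : A ⊆ B) :
    P ∩ f ⁻¹' A = (fun x => s * x + c) ⁻¹' A := by
  ext y
  refine ⟨fun ⟨hy, hfy⟩ => by rwa [mem_preimage, ← hf y hy], fun hy => ?_⟩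
  obtain ⟨x, hx, hfx⟩ := hsurj (hA hy)
  obtain rfl : x = y := mul_left_cancel₀ hs (add_right_cancel ((hf x hx).symm.trans hfx))
  exact ⟨hx, by rwa [mem_preimage, hfx]⟩

lemma ne_zero_and_abs_inv_eq_of_abs_mul_eq_one {s L : ℝ} (h : |s| * L = 1) :
    s ≠ 0 ∧ |s⁻¹| = L :=
  ⟨abs_ne_zero.1 (left_ne_zero_of_mul_eq_one h), by rw [abs_inv, eq_inv_of_mul_eq_one_right h]⟩

namespace CantorData

variable (S : CantorData)

lemma a_strictMonoOn : StrictMonoOn S.a (Iic (2 * S.kI - 1)) :=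
  strictMonoOn_Iic_of_lt_succ fun m hm => by
    simpa [Order.succ_eq_add_one] using S.ha_lt m (by omega)

lemma Icc_subset_IU {i : ℕ} (hi : i < S.kI) : Icc (S.a (2 * i)) (S.a (2 * i + 1)) ⊆ S.IU :=
  subset_biUnion_of_mem (u := fun i => Icc (S.a (2 * i)) (S.a (2 * i + 1)))
    (Finset.mem_coe.2 (Finset.mem_range.2 hi))

lemma IU_subset_Icc_s14 : S.IU ⊆ Icc 0 1 := by
  intro x hx
  simp only [IU, Finset.mem_range, mem_iUnion] at hx
  obtain ⟨i, hi, hx1, hx2⟩ := hx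
  have hmono := S.a_strictMonoOn.monotoneOn
  exact ⟨S.ha0.trans ((hmono (by simp) (by simp; omega) (by omega)).trans hx1),
    hx2.trans ((hmono (by simp; omega) (by simp) (by omega)).trans S.ha1)⟩

lemma pairwise_disjoint_Icc :
    (Finset.range S.kI : Set ℕ).Pairwise
      (Function.onFun Disjoint fun i => Icc (S.a (2 * i)) (S.a (2 * i + 1))) := by
  have hlt : ∀ i j, i < j → j < S.kI →
      Disjoint (Icc (S.a (2 * i)) (S.a (2 * i + 1))) (Icc (S.a (2 * j)) (S.a (2 * j + 1))) := by
    intro i j hij hj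
    have := S.a_strictMonoOn (by simp; omega) (by simp; omega) (by omega : 2 * i + 1 < 2 * j)
    exact disjoint_left.2 fun x hxi hxj => by linarith [hxi.2, hxj.1]
  intro i hi j hj hij
  simp only [Finset.coe_range, mem_Iio] at hi hj
  rcases hij.lt_or_gt with h | h
  · exact hlt i j h hj
  · exact (hlt j i h hi).symm

lemma length_Icc_nonneg {i : ℕ} (hi : i ∈ Finset.range S.kI) :
    0 ≤ S.a (2 * i + 1) - S.a (2 * i) :=
  sub_nonneg.2 (S.ha_lt _ (by simp only [Finset.mem_range] at hi; omega)).le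

lemma lam_nonneg : 0 ≤ S.lam :=
  Finset.sum_nonneg fun _ => S.length_Icc_nonneg

lemma volume_preimage_inter_Icc {i : ℕ} (hi : i < S.kI) {A : Set ℝ} (hA : A ⊆ Icc 0 1) :
    volume (S.G ⁻¹' A ∩ Icc (S.a (2 * i)) (S.a (2 * i + 1))) =
      ENNReal.ofReal (S.a (2 * i + 1) - S.a (2 * i)) * volume A := by
  obtain ⟨s, c, hslope, hG, hbij⟩ := S.hGI i hi
  obtain ⟨hs, hlen⟩ := ne_zero_and_abs_inv_eq_of_abs_mul_eq_one hslope
  rw [inter_comm, inter_preimage_eq_preimage_affine hs hG hbij.surjOn hA,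
    volume_preimage_affine hs, hlen]

lemma volume_preimage_inter_IU {A : Set ℝ} (hA : A ⊆ Icc 0 1) :
    volume (S.G ⁻¹' A ∩ S.IU) = ENNReal.ofReal S.lam * volume A := by
  have hIU : MeasurableSet S.IU :=
    (Finset.range S.kI).measurableSet_biUnion fun _ _ => measurableSet_Icc
  rw [← Measure.restrict_apply' hIU, IU,
    Measure.restrict_biUnion_finset S.pairwise_disjoint_Icc fun _ => measurableSet_Icc,
    Measure.sum_apply_of_countable,
    Finset.tsum_subtype (f := fun i => volume.restrict (Icc (S.a (2 * i)) (S.a (2 * i + 1)))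
      (S.G ⁻¹' A)),
    lam, ENNReal.ofReal_sum_of_nonneg fun _ => S.length_Icc_nonneg, Finset.sum_mul]
  refine Finset.sum_congr rfl fun i hi => ?_
  rw [Measure.restrict_apply' measurableSet_Icc,
    S.volume_preimage_inter_Icc (Finset.mem_range.1 hi) hA]

lemma volume_IU : volume S.IU = ENNReal.ofReal S.lam := by
  have h : S.G ⁻¹' Icc 0 1 ∩ S.IU = S.IU :=
    inter_eq_right.2 fun x hx => S.hGmaps (S.IU_subset_Icc_s14 hx)
  rw [← h, S.volume_preimage_inter_IU subset_rfl, Real.volume_Icc, sub_zero,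
    ENNReal.ofReal_one, mul_one]

lemma volume_IU_lt_one : volume S.IU < 1 := by
  have hopen : IsOpen S.IUᶜ :=
    (isClosed_biUnion_finset fun _ _ => isClosed_Icc).isOpen_compl
  obtain ⟨x, hx, hxU⟩ := S.hkJ
  have hx' : x ∈ closure (Ioo (0:ℝ) 1) := by rwa [closure_Ioo zero_ne_one]
  obtain ⟨y, hyU, hy⟩ := mem_closure_iff.1 hx' _ hopen hxU
  have hpos : 0 < volume (S.IUᶜ ∩ Ioo 0 1) :=
    (hopen.inter isOpen_Ioo).measure_pos _ ⟨y, hyU, hy⟩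
  have hsum : volume S.IU + volume (S.IUᶜ ∩ Ioo 0 1) ≤ 1 := by
    rw [← measure_union (disjoint_compl_right.mono_right inter_subset_left)
      (hopen.inter isOpen_Ioo).measurableSet]
    calc _ ≤ volume (Icc (0:ℝ) 1) :=
          measure_mono <| union_subset S.IU_subset_Icc_s14 <|
            inter_subset_right.trans Ioo_subset_Icc_self
      _ = 1 := by simp
  exact (ENNReal.lt_add_right ((le_self_add.trans hsum).trans_lt ENNReal.one_lt_top).ne
    hpos.ne').trans_le hsum

lemma Lam_succ_subset (n : ℕ) : S.Lam (n + 1) ⊆ S.G ⁻¹' S.Lam n ∩ S.IU := by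
  rintro x ⟨hx, h⟩
  refine ⟨⟨S.hGmaps hx, fun i hi => ?_⟩, h 0 n.succ_pos⟩
  rw [← Function.iterate_succ_apply]
  exact h (i + 1) (by omega)

lemma volume_Lam_le (n : ℕ) : volume (S.Lam n) ≤ volume S.IU ^ n := by
  induction n with
  | zero => exact (measure_mono fun x hx => hx.1).trans (by simp)
  | succ n ih =>
    calc volume (S.Lam (n + 1)) ≤ volume (S.G ⁻¹' S.Lam n ∩ S.IU) :=
          measure_mono (S.Lam_succ_subset n)
      _ = volume S.IU * volume (S.Lam n) := by
          rw [S.volume_preimage_inter_IU fun x hx => hx.1, S.volume_IU]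
      _ ≤ volume S.IU ^ (n + 1) := by
          rw [pow_succ']
          gcongr

lemma volume_Cantor : volume S.Cantor = 0 :=
  le_antisymm (ge_of_tendsto' (ENNReal.tendsto_pow_atTop_nhds_zero_of_lt_one S.volume_IU_lt_one)
    fun n => (measure_mono (iInter_subset _ n)).trans (S.volume_Lam_le n)) zero_le

lemma mem_IU_or_mem_gap {x : ℝ} (hx0 : S.a 0 ≤ x) : ∀ m < 2 * S.kI, x ≤ S.a m →
    x ∈ S.IU ∨ ∃ i, i + 1 < S.kI ∧ x ∈ Ioo (S.a (2 * i + 1)) (S.a (2 * i + 2)) := by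
  intro m
  induction m with
  | zero =>
    intro _ hx
    exact Or.inl (S.Icc_subset_IU S.hkI ⟨hx0, hx.trans (S.ha_lt 0 (by omega)).le⟩)
  | succ m ih =>
    intro hm hxm
    rcases le_or_gt x (S.a m) with h | h
    · exact ih (by omega) h
    obtain ⟨i, rfl | rfl⟩ := Nat.even_or_odd' m
    · exact Or.inl (S.Icc_subset_IU (by omega) ⟨h.le, hxm⟩)
    · rcases hxm.lt_or_eq with h' | rfl
      · exact Or.inr ⟨i, by omega, h, h'⟩
      · exact Or.inl (S.Icc_subset_IU (i := i + 1) (by omega)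
          ⟨le_rfl, (S.ha_lt _ (by omega)).le⟩)

lemma diff_IU_subset_gaps : Icc 0 1 \ S.IU ⊆ Ico 0 (S.a 0) ∪
    (⋃ i ∈ {i | i + 1 < S.kI}, Ioo (S.a (2 * i + 1)) (S.a (2 * i + 2))) ∪
    Ioc (S.a (2 * S.kI - 1)) 1 := by
  rintro x ⟨⟨hx0, hx1⟩, hxU⟩
  rcases lt_or_ge x (S.a 0) with hl | hl
  · exact Or.inl (Or.inl ⟨hx0, hl⟩)
  rcases lt_or_ge (S.a (2 * S.kI - 1)) x with hr | hr
  · exact Or.inr ⟨hr, hx1⟩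
  rcases S.mem_IU_or_mem_gap hl _ (by have := S.hkI; omega) hr with h | ⟨i, hi, h⟩
  · exact absurd h hxU
  · exact Or.inl (Or.inr (mem_biUnion hi h))

lemma volume_preimage_inter_diff_IU_eq_zero {N : Set ℝ} (hN : volume N = 0) :
    volume (S.G ⁻¹' N ∩ (Icc 0 1 \ S.IU)) = 0 := by
  have null_of_affine : ∀ {P : Set ℝ} {L : ℝ}, (∃ s c : ℝ, |s| * L = 1 ∧
      (∀ x ∈ P, S.G x = s * x + c) ∧ SurjOn S.G P (Ioo 0 1)) → volume (S.G ⁻¹' N ∩ P) = 0 := by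
    rintro P L ⟨s, c, hslope, hG, -⟩
    have hs := (ne_zero_and_abs_inv_eq_of_abs_mul_eq_one hslope).1
    refine measure_mono_null (fun x ⟨hxN, hxP⟩ => ?_)
      ((volume_preimage_affine hs c N).trans (by rw [hN, mul_zero]))
    rwa [mem_preimage, ← hG x hxP]
  refine measure_mono_null (inter_subset_inter_right _ S.diff_IU_subset_gaps) ?_
  rw [inter_union_distrib_left, inter_union_distrib_left, inter_iUnion₂]
  refine measure_union_null (measure_union_null ?_
    ((measure_biUnion_null_iff (to_countable _)).2 fun i hi => null_of_affine (S.hGJmid i hi))) ?_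
  · rcases lt_or_ge 0 (S.a 0) with h | h
    · exact null_of_affine (S.hGJleft h)
    · rw [Ico_eq_empty h.not_gt, inter_empty, measure_empty]
  · rcases lt_or_ge (S.a (2 * S.kI - 1)) 1 with h | h
    · exact null_of_affine (S.hGJright h)
    · rw [Ioc_eq_empty h.not_gt, inter_empty, measure_empty]

lemma summable_psi (x : ℝ) :
    Summable fun i : ℕ => if S.G^[i] x ∈ S.IU then (0 : ℝ) else 2⁻¹ ^ (i + 1) :=
  (summable_geometric_of_lt_one (r := (2:ℝ)⁻¹) (by norm_num) (by norm_num)).of_nonneg_of_le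
    (fun i => by split_ifs <;> positivity) fun i => by
      split_ifs
      · positivity
      · exact pow_le_pow_of_le_one (by norm_num) (by norm_num) i.le_succ

lemma psi_nonneg (x : ℝ) : 0 ≤ S.psi x :=
  tsum_nonneg fun i => by split_ifs <;> positivity

lemma psi_eq (x : ℝ) :
    S.psi x = (if x ∈ S.IU then 0 else 2⁻¹) + 2⁻¹ * S.psi (S.G x) := by
  rw [psi, (S.summable_psi x).tsum_eq_zero_add, psi, ← tsum_mul_left]
  congr 1
  · simp
  · refine tsum_congr fun i => ?_
    rw [Function.iterate_succ_apply, mul_ite, mul_zero, ← pow_succ']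

lemma iterate_mem_IU_of_psi_eq_zero {x : ℝ} (h : S.psi x = 0) (i : ℕ) : S.G^[i] x ∈ S.IU := by
  have hsum : HasSum _ (S.psi x) := (S.summable_psi x).hasSum
  rw [h, hasSum_zero_iff_of_nonneg fun i => by split_ifs <;> positivity] at hsum
  by_contra hi
  simpa [hi] using congrFun hsum i

lemma volume_psi_le_eq_volume_preimage_inter_IU {s : ℝ} (hs : s ≤ 1 / 2) :
    volume ({x | S.psi x ≤ s} ∩ Icc 0 1) =
      volume (S.G ⁻¹' ({x | S.psi x ≤ 2 * s} ∩ Icc 0 1) ∩ S.IU) := by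
  have hsub :
      S.G ⁻¹' ({x | S.psi x ≤ 2 * s} ∩ Icc 0 1) ∩ S.IU ⊆ {x | S.psi x ≤ s} ∩ Icc 0 1 := by
    rintro x ⟨⟨hGx, -⟩, hx⟩
    have hrec := S.psi_eq x
    rw [if_pos hx] at hrec
    exact ⟨by simp only [mem_ofPred_eq] at hGx ⊢; linarith, S.IU_subset_Icc_s14 hx⟩
  have hsup : {x | S.psi x ≤ s} ∩ Icc 0 1 ⊆
      S.G ⁻¹' ({x | S.psi x ≤ 2 * s} ∩ Icc 0 1) ∩ S.IU ∪
        S.G ⁻¹' S.Cantor ∩ (Icc 0 1 \ S.IU) := by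
    rintro x ⟨hψ, hx⟩
    have hrec := S.psi_eq x
    simp only [mem_ofPred_eq] at hψ
    by_cases hxU : x ∈ S.IU
    · rw [if_pos hxU] at hrec
      exact Or.inl ⟨⟨show S.psi (S.G x) ≤ 2 * s by linarith, S.hGmaps hx⟩, hxU⟩
    · rw [if_neg hxU] at hrec
      have h0 : S.psi (S.G x) = 0 := le_antisymm (by linarith) (S.psi_nonneg _)
      have hGx : S.G x ∈ S.Cantor :=
        mem_iInter.2 fun _ => ⟨S.hGmaps hx, fun i _ => S.iterate_mem_IU_of_psi_eq_zero h0 i⟩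
      exact Or.inr ⟨hGx, hx, hxU⟩
  refine le_antisymm ((measure_mono hsup).trans ((measure_union_le _ _).trans ?_))
    (measure_mono hsub)
  rw [S.volume_preimage_inter_diff_IU_eq_zero S.volume_Cantor, add_zero]

end CantorData

/-- self-similarity of the distribution function:
`F(s) = λ F(2s)` for all `s ∈ [0, 1/2]`. -/
theorem F_self_similar (S : CantorData) (s : ℝ)
    (hs : s ∈ Set.Icc (0:ℝ) (1 / 2)) :
    S.F s = S.lam * S.F (2 * s) := by
  simp only [CantorData.F, CantorData.mes, Measure.restrict_apply' measurableSet_Icc]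
  rw [S.volume_psi_le_eq_volume_preimage_inter_IU hs.2, S.volume_preimage_inter_IU inter_subset_right,
    ENNReal.toReal_mul, ENNReal.toReal_ofReal S.lam_nonneg]
end
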